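/- Let q ≥ 2, m ≥ 1, and let i be an integer with 1 ≤ i < q^m such that l_m(i−1) = m. Then the minimal prefix satisfies ī_m = (i−1)‾_m + 1; equivalently ī_m = i. -/

import Mathlib

/-- `pt q n s = ⌊n / q^s⌋` (the "part"). -/
def pt (q n s : ℕ) : ℕ := n / q ^ s

/-- `rs q n s = n mod q^s` (the "residue"). -/
def rs (q n s : ℕ) : ℕ := n % q ^ s

/-- `lm q m n = min { j | 1 ≤ j ≤ m and part(n,j) ≥ res(n, m-j) }`. -/
noncomputable def lm (q m n : ℕ) : ℕ :=
  sInf {j : ℕ | 1 ≤ j ∧ j ≤ m ∧ rs q n (m - j) ≤ pt q n j}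

/-- The minimal prefix `n̄_m = n - res(n, m - l_m(n))`. -/
noncomputable def mp (q m n : ℕ) : ℕ := n - rs q n (m - lm q m n)

/-!
Since `l_m(i-1) = m`, the prefix of `i-1` is `i-1` itself. For `i`, let `l = l_m(i)`. If `l < m`,
then `l` failed the test for `i-1`: `⌊(i-1)/q^l⌋ < (i-1) mod q^(m-l)`. Passing from `i-1` to `i`
raises the part by at most one and, unless `q^(m-l) ∣ i`, raises the residue by exactly one, so `l`
would fail the test for `i` as well. Hence `q^(m-l) ∣ i`, and `ī_m = i`.
-/

theorem Nat.add_one_mod_of_not_dvd {n d : ℕ} (h : ¬ d ∣ n + 1) : (n + 1) % d = n % d + 1 := by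
  have hdiv := Nat.succ_div_of_not_dvd h
  have hsucc := Nat.div_add_mod (n + 1) d
  have hn := Nat.div_add_mod n d
  rw [hdiv] at hsucc
  omega

theorem Nat.add_one_div_le (n d : ℕ) : (n + 1) / d ≤ n / d + 1 := by
  rw [Nat.succ_div]
  split <;> omega

theorem Nat.add_one_mod_eq_zero_of_div_lt_mod {n d e : ℕ} (hlt : n / e < n % d)
    (hle : (n + 1) % d ≤ (n + 1) / e) : (n + 1) % d = 0 := by
  by_contra hne
  have hmod := Nat.add_one_mod_of_not_dvd (mt Nat.mod_eq_zero_of_dvd hne)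
  have hdiv := Nat.add_one_div_le n e
  omega

section MinimalPrefix

variable {q m n : ℕ}

@[simp]
theorem rs_zero : rs q n 0 = 0 :=
  Nat.mod_one n

theorem lm_spec (hm : 1 ≤ m) :
    1 ≤ lm q m n ∧ lm q m n ≤ m ∧ rs q n (m - lm q m n) ≤ pt q n (lm q m n) :=
  Nat.sInf_mem (s := {j | 1 ≤ j ∧ j ≤ m ∧ rs q n (m - j) ≤ pt q n j}) ⟨m, hm, le_rfl, by simp⟩

theorem pt_lt_rs_of_lt_lm {j : ℕ} (hj1 : 1 ≤ j) (hjm : j ≤ m) (hj : j < lm q m n) :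
    pt q n j < rs q n (m - j) :=
  lt_of_not_ge fun hle => Nat.notMem_of_lt_sInf hj ⟨hj1, hjm, hle⟩

theorem mp_eq_self_of_rs_eq_zero (h : rs q n (m - lm q m n) = 0) : mp q m n = n := by
  simp [mp, h]

theorem mp_eq_self_of_lm_eq (h : lm q m n = m) : mp q m n = n :=
  mp_eq_self_of_rs_eq_zero (by simp [h])

theorem mp_add_one_of_lm_eq (hl : lm q m n = m) : mp q m (n + 1) = n + 1 := by
  apply mp_eq_self_of_rs_eq_zero
  rcases Nat.lt_or_ge (lm q m (n + 1)) m with hlt | hge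
  · obtain ⟨hl1, -, hle⟩ := lm_spec (q := q) (m := m) (n := n + 1) (by omega)
    exact Nat.add_one_mod_eq_zero_of_div_lt_mod (pt_lt_rs_of_lt_lm hl1 hlt.le (by rwa [hl])) hle
  · simp [Nat.sub_eq_zero_of_le hge]

end MinimalPrefix

theorem mp_succ_general (q m : ℕ)
    (i : ℕ) (hi1 : 1 ≤ i) (hl : lm q m (i - 1) = m) :
    mp q m i = mp q m (i - 1) + 1 ∧ mp q m i = i := by
  obtain ⟨n, rfl⟩ : ∃ n, i = n + 1 := ⟨i - 1, by omega⟩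
  rw [Nat.add_sub_cancel] at hl ⊢
  have hprev : mp q m n = n := mp_eq_self_of_lm_eq hl
  have hsucc : mp q m (n + 1) = n + 1 := mp_add_one_of_lm_eq hl
  exact ⟨by rw [hprev, hsucc], hsucc⟩

theorem mp_succ (q m : ℕ) (hq : 2 ≤ q) (hm : 1 ≤ m)
    (i : ℕ) (hi1 : 1 ≤ i) (hi2 : i < q ^ m) (hl : lm q m (i - 1) = m) :
    mp q m i = mp q m (i - 1) + 1 ∧ mp q m i = i :=
  mp_succ_general q m i hi1 hl
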